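/- arXiv:2211.09368 — 2 statements merged into one kernel-verified Lean document; each statement's English description precedes it below -/
import Mathlib

section
/- Let m ≥ 2 and n ≥ 1. For v ∈ (ZMod m)^n define the Lee-based chain weight w(v) = 0 if v = 0, and w(v) = w_L(v_t) + (t-1)·⌊m/2⌋ where t is the largest index with v_t ≠ 0. Then w(u - v) defines a metric on (ZMod m)^n, i.e., w(v) = 0 iff v = 0, w(-v) = w(v), and w(u+v) ≤ w(u) + w(v). -/
/-- The Lee weight on `ZMod m`. -/
def leeWeight (m : ℕ) (x : ZMod m) : ℕ := min x.val (m - x.val)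

/-- The chain (NRT-type) pomset weight on `(ZMod m)^n`: the Lee weight of the
top nonzero coordinate plus `⌊m/2⌋` for each coordinate below it. -/
noncomputable def chainWeight (m n : ℕ) (v : Fin n → ZMod m) : ℕ :=
  if h : v = 0 then 0
  else
    let t : Fin n := (Finset.univ.filter fun i => v i ≠ 0).max' (by
      rw [Finset.filter_nonempty_iff]
      obtain ⟨i, hi⟩ := Function.ne_iff.mp h
      exact ⟨i, Finset.mem_univ i, by simpa using hi⟩)
    leeWeight m (v t) + t.val * (m / 2)

/-!
Since a Lee weight never exceeds `⌊m/2⌋`, the term `w_L(v_i) + i⌊m/2⌋` of the top nonzero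
coordinate dominates those of all lower nonzero coordinates, so the chain weight is the maximum
of these terms over the nonzero coordinates. Positivity, symmetry and the triangle inequality then
hold term by term because they hold for the Lee weight, and they pass through the maximum.
-/

section LeeWeight

variable {m : ℕ}

lemma leeWeight_zero_modulus (x : ZMod 0) : leeWeight 0 x = 0 := by
  simp [leeWeight]

lemma leeWeight_le_half (x : ZMod m) : leeWeight m x ≤ m / 2 := by
  unfold leeWeight
  omega

lemma leeWeight_pos [NeZero m] {x : ZMod m} (hx : x ≠ 0) : 0 < leeWeight m x := by
  have hlt := ZMod.val_lt x
  have hval : x.val ≠ 0 := (ZMod.val_ne_zero x).mpr hx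
  unfold leeWeight
  omega

lemma leeWeight_neg (x : ZMod m) : leeWeight m (-x) = leeWeight m x := by
  rcases m.eq_zero_or_pos with rfl | hm
  · simp only [leeWeight_zero_modulus]
  have : NeZero m := ⟨hm.ne'⟩
  have hlt := ZMod.val_lt x
  unfold leeWeight
  rw [ZMod.neg_val]
  split_ifs with hx
  · simp [hx]
  · omega

lemma leeWeight_add_le (x y : ZMod m) :
    leeWeight m (x + y) ≤ leeWeight m x + leeWeight m y := by
  rcases m.eq_zero_or_pos with rfl | hm
  · simp only [leeWeight_zero_modulus, le_refl]
  have : NeZero m := ⟨hm.ne'⟩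
  have hx := ZMod.val_lt x
  have hy := ZMod.val_lt y
  unfold leeWeight
  rw [ZMod.val_add]
  rcases lt_or_ge (x.val + y.val) m with hsum | hsum
  · rw [Nat.mod_eq_of_lt hsum]
    omega
  · rw [Nat.mod_eq_sub_mod hsum, Nat.mod_eq_of_lt (by omega)]
    omega

end LeeWeight

def chainTerm (m : ℕ) {n : ℕ} (v : Fin n → ZMod m) (i : Fin n) : ℕ :=
  if v i = 0 then 0 else leeWeight m (v i) + i.val * (m / 2)

section ChainWeight

variable {m n : ℕ}

lemma chainTerm_eq_zero_iff [NeZero m] (v : Fin n → ZMod m) (i : Fin n) :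
    chainTerm m v i = 0 ↔ v i = 0 := by
  unfold chainTerm
  split_ifs with hi
  · simp [hi]
  · simp [hi, (leeWeight_pos hi).ne']

lemma chainTerm_neg (v : Fin n → ZMod m) : chainTerm m (-v) = chainTerm m v := by
  funext i
  simp [chainTerm, leeWeight_neg]

lemma chainTerm_add_le (u v : Fin n → ZMod m) (i : Fin n) :
    chainTerm m (u + v) i ≤ chainTerm m u i + chainTerm m v i := by
  have hlee := leeWeight_add_le (u i) (v i)
  unfold chainTerm
  split_ifs <;> simp_all
  omega

lemma chainTerm_le_of_le (v : Fin n → ZMod m) {i j : Fin n} (hj : v j ≠ 0) (hij : i ≤ j) :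
    chainTerm m v i ≤ chainTerm m v j := by
  rcases hij.lt_or_eq with hlt | rfl
  · have hi := leeWeight_le_half (v i)
    have hij' : i.val + 1 ≤ j.val := hlt
    have hstep : (i.val + 1) * (m / 2) ≤ j.val * (m / 2) := Nat.mul_le_mul_right _ hij'
    unfold chainTerm
    split_ifs
    · omega
    · rw [add_mul] at hstep
      omega
  · exact le_rfl

lemma chainWeight_eq_sup (v : Fin n → ZMod m) :
    chainWeight m n v = Finset.univ.sup (chainTerm m v) := by
  unfold chainWeight
  split_ifs with hv
  · rw [eq_comm, ← bot_eq_zero', Finset.sup_eq_bot_iff]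
    simp [hv, chainTerm]
  · set S := Finset.univ.filter fun i => v i ≠ 0
    have hS : S.Nonempty := by
      obtain ⟨i, hi⟩ := Function.ne_iff.mp hv
      exact ⟨i, by simpa [S] using hi⟩
    have htop : v (S.max' hS) ≠ 0 := (Finset.mem_filter.mp (S.max'_mem hS)).2
    have hsup : Finset.univ.sup (chainTerm m v) = chainTerm m v (S.max' hS) := by
      refine le_antisymm (Finset.sup_le fun i _ => ?_) (Finset.le_sup (Finset.mem_univ _))
      by_cases hi : v i = 0
      · simp [chainTerm, hi]
      · exact chainTerm_le_of_le v htop (S.le_max' i (by simpa [S] using hi))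
    rw [hsup, chainTerm, if_neg htop]

end ChainWeight

theorem chainWeight_metric_general (m n : ℕ) (hm : 2 ≤ m) :
    (∀ v : Fin n → ZMod m, chainWeight m n v = 0 ↔ v = 0) ∧
      (∀ v : Fin n → ZMod m, chainWeight m n (-v) = chainWeight m n v) ∧
      (∀ u v : Fin n → ZMod m,
        chainWeight m n (u + v) ≤ chainWeight m n u + chainWeight m n v) := by
  have : NeZero m := ⟨by omega⟩
  refine ⟨fun v => ?_, fun v => ?_, fun u v => ?_⟩
  · rw [chainWeight_eq_sup, ← bot_eq_zero', Finset.sup_eq_bot_iff, funext_iff]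
    simp only [Finset.mem_univ, true_implies, bot_eq_zero', chainTerm_eq_zero_iff, Pi.zero_apply]
  · rw [chainWeight_eq_sup, chainWeight_eq_sup, chainTerm_neg]
  · simp only [chainWeight_eq_sup]
    exact Finset.sup_le fun i _ => (chainTerm_add_le u v i).trans
      (add_le_add (Finset.le_sup (Finset.mem_univ i)) (Finset.le_sup (Finset.mem_univ i)))

theorem chainWeight_metric (m n : ℕ) (hm : 2 ≤ m) (hn : 1 ≤ n) :
    (∀ v : Fin n → ZMod m, chainWeight m n v = 0 ↔ v = 0) ∧
      (∀ v : Fin n → ZMod m, chainWeight m n (-v) = chainWeight m n v) ∧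
      (∀ u v : Fin n → ZMod m,
        chainWeight m n (u + v) ≤ chainWeight m n u + chainWeight m n v) :=
  chainWeight_metric_general m n hm
end

section
/- Let m ≥ 2 be odd, n ≥ 1, and let w be the chain pomset weight on V = (ZMod m)^n. Fix 0 ≤ k ≤ n and let C = {v ∈ V : v_i = 0 for i ≤ n-k} (the submodule supported on coordinates n-k+1,…,n). Then the balls of radius (n-k)⌊m/2⌋ centered at codewords of C are pairwise disjoint and cover V; i.e., C is an ((n-k)⌊m/2⌋)-perfect code of cardinality m^k. -/
lemma weight_le_iff (m : ℕ) (hm : 2 ≤ m) {n : ℕ} (r : ℕ) (v : Fin n → ZMod m) :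
    chainWeight m n v ≤ r * (m / 2) ↔ ∀ i : Fin n, r ≤ i.val → v i = 0 := by
  haveI : NeZero m := ⟨by omega⟩
  unfold chainWeight
  split_ifs with h
  · simp only [Nat.zero_le, true_iff]
    intro i _
    exact congrFun h i
  · have hne : (Finset.univ.filter fun i => v i ≠ 0).Nonempty := by
      rw [Finset.filter_nonempty_iff]
      obtain ⟨i, hi⟩ := Function.ne_iff.mp h
      exact ⟨i, Finset.mem_univ i, by simpa using hi⟩
    set t := (Finset.univ.filter fun i => v i ≠ 0).max' hne with ht
    show leeWeight m (v t) + t.val * (m / 2) ≤ r * (m / 2) ↔ _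
    have htmem := Finset.max'_mem _ hne
    have hvt : v t ≠ 0 := (Finset.mem_filter.mp htmem).2
    have hvlt : (v t).val < m := ZMod.val_lt _
    have hvne : (v t).val ≠ 0 := fun hh => hvt ((ZMod.val_eq_zero _).mp hh)
    have hlee1 : 1 ≤ leeWeight m (v t) := by unfold leeWeight; omega
    have hlee2 : leeWeight m (v t) ≤ m / 2 := by unfold leeWeight; omega
    constructor
    · intro hw i hi
      by_contra hvi
      have : i ≤ t := Finset.le_max' _ i (Finset.mem_filter.mpr ⟨Finset.mem_univ i, hvi⟩)
      have hti : r ≤ t.val := le_trans hi this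
      have h2 : 1 ≤ m / 2 := by omega
      nlinarith [Nat.mul_le_mul_right (m / 2) hti]
    · intro hz
      have htr : t.val < r := by
        by_contra hh
        exact hvt (hz t (by omega))
      have : t.val * (m / 2) ≤ (r - 1) * (m / 2) :=
        Nat.mul_le_mul_right _ (by omega)
      have h2 : 1 ≤ m / 2 := by omega
      have hsub := Nat.sub_mul r 1 (m / 2)
      have hge : m / 2 ≤ r * (m / 2) := Nat.le_mul_of_pos_left _ (by omega)
      omega

theorem chain_r_perfect (m n k : ℕ) (hm : 2 ≤ m) (hmodd : Odd m) (hn : 1 ≤ n)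
    (hk : k ≤ n) :
    letI C : Set (Fin n → ZMod m) := {v | ∀ i : Fin n, (i : ℕ) < n - k → v i = 0}
    (C.Pairwise fun c c' =>
        Disjoint {v : Fin n → ZMod m | chainWeight m n (v - c) ≤ (n - k) * (m / 2)}
          {v : Fin n → ZMod m | chainWeight m n (v - c') ≤ (n - k) * (m / 2)}) ∧
      (⋃ c ∈ C, {v : Fin n → ZMod m | chainWeight m n (v - c) ≤ (n - k) * (m / 2)}) =
        Set.univ ∧
      Nat.card C = m ^ k := by
  set C : Set (Fin n → ZMod m) := {v | ∀ i : Fin n, (i : ℕ) < n - k → v i = 0} with hC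
  refine ⟨?_, ?_, ?_⟩
  · intro c hc c' hc' hne
    rw [Set.disjoint_left]
    intro v hv hv'
    rw [Set.mem_setOf_eq, weight_le_iff m hm] at hv hv'
    apply hne
    funext i
    by_cases h : i.val < n - k
    · rw [hc i h, hc' i h]
    · have h1 := hv i (by omega)
      have h2 := hv' i (by omega)
      simp only [Pi.sub_apply, sub_eq_zero] at h1 h2
      rw [← h1, ← h2]
  · rw [Set.eq_univ_iff_forall]
    intro v
    refine Set.mem_iUnion₂.mpr ⟨fun i => if i.val < n - k then 0 else v i, ?_, ?_⟩
    · intro i hi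
      simp [hi]
    · rw [Set.mem_setOf_eq, weight_le_iff m hm]
      intro i hi
      simp [Nat.not_lt.mpr hi]
  · haveI : NeZero m := ⟨by omega⟩
    have e : C ≃ (Fin k → ZMod m) :=
      { toFun := fun v j => v.1 ⟨n - k + j.val, by omega⟩
        invFun := fun f => ⟨fun i => if h : n - k ≤ i.val then
            f ⟨i.val - (n - k), by omega⟩ else 0, by
          intro i hi
          exact dif_neg (by omega)⟩
        left_inv := by
          rintro ⟨v, hv⟩
          ext i
          by_cases h : n - k ≤ i.val
          · exact (dif_pos h).trans (congrArg v (Fin.ext (by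
              show n - k + (i.val - (n - k)) = i.val; omega)))
          · exact (dif_neg h).trans (hv i (by omega)).symm
        right_inv := by
          intro f
          funext j
          exact (dif_pos (Nat.le_add_right _ _)).trans (congrArg f (Fin.ext (by
            show n - k + j.val - (n - k) = j.val; omega))) }
    rw [Nat.card_congr e]
    rw [Nat.card_eq_fintype_card, Fintype.card_fun, ZMod.card, Fintype.card_fin]
end
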